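/- arXiv:2601.18080 — 6 statements merged into one kernel-verified Lean document; each statement's English description precedes it below -/
import Mathlib

section
/- Let P_1, P_2, … be orthogonal projections on a complex Hilbert space H, let 0 < λ_n < 2 for every n, and set A_n := I − λ_n P_n, T_0 := I, T_n := A_n A_{n−1} ⋯ A_1. If ∑_{n=1}^∞ λ_n/(2−λ_n) < ∞, then the products T_n converge in the strong operator topology: there exists a bounded operator T_∞ on H such that T_n x → T_∞ x in norm for every x ∈ H. -/
/-!
Each factor `A n = I - λₙPₙ` satisfies `‖A n y‖² = ‖y‖² - λₙ(2 - λₙ)‖Pₙ y‖²`, so along an orbit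
`xₙ = T n x` the norms decrease and the losses `λₙ(2 - λₙ)‖Pₙ xₙ‖²` sum to at most `‖x‖²`.
The step `xₙ₊₁ - xₙ = -λₙ Pₙ xₙ` has norm `λₙ‖Pₙ xₙ‖`, which by AM-GM is at most half of
`λₙ/(2 - λₙ) + λₙ(2 - λₙ)‖Pₙ xₙ‖²`. Hence the steps are summable, every orbit is Cauchy, and the
pointwise limit is a bounded operator by Banach-Steinhaus.
-/

open ContinuousLinearMap Filter Topology

theorem ContinuousLinearMap.IsStarProjection.norm_sub_smul_apply_sq
    {𝕜 E : Type*} [RCLike 𝕜] [NormedAddCommGroup E] [InnerProductSpace 𝕜 E] [CompleteSpace E]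
    {P : E →L[𝕜] E} (hP : IsStarProjection P) (t : ℝ) (y : E) :
    ‖y - (t : 𝕜) • P y‖ ^ 2 = ‖y‖ ^ 2 - t * (2 - t) * ‖P y‖ ^ 2 := by
  have hPy : (inner 𝕜 y (P y) : 𝕜) = ‖P y‖ ^ 2 := by
    have hPP : P (P y) = P y := congr($(hP.isIdempotentElem.eq) y)
    conv_lhs => rw [← hPP, ← adjoint_inner_left, hP.isSelfAdjoint.adjoint_eq]
    exact inner_self_eq_norm_sq_to_K _
  rw [@norm_sub_sq 𝕜, inner_smul_right, hPy, norm_smul, RCLike.norm_ofReal]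
  rw [← RCLike.ofReal_pow, ← RCLike.ofReal_mul, RCLike.ofReal_re, mul_pow, sq_abs]
  ring

theorem two_mul_le_inv_add_mul_sq {s : ℝ} (hs : 0 < s) (t : ℝ) : 2 * t ≤ s⁻¹ + s * t ^ 2 := by
  have key : s⁻¹ + s * t ^ 2 - 2 * t = s⁻¹ * (1 - s * t) ^ 2 := by field_simp; ring
  linarith [mul_nonneg (inv_nonneg.2 hs.le) (sq_nonneg (1 - s * t))]

theorem summable_of_sq_norm_succ_eq {E : Type*} [SeminormedAddCommGroup E] {x : ℕ → E}
    {d : ℕ → ℝ} (hd : ∀ n, 0 ≤ d n) (hx : ∀ n, ‖x (n + 1)‖ ^ 2 = ‖x n‖ ^ 2 - d n) :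
    Summable d := by
  refine summable_of_sum_range_le hd (c := ‖x 0‖ ^ 2) fun n => ?_
  have htel : ∑ k ∈ Finset.range n, d k = ‖x 0‖ ^ 2 - ‖x n‖ ^ 2 := by
    rw [← Finset.sum_range_sub' (fun k => ‖x k‖ ^ 2)]
    exact Finset.sum_congr rfl fun k _ => by rw [hx]; ring
  linarith [sq_nonneg ‖x n‖]

theorem ContinuousLinearMap.exists_tendsto_of_summable_norm_sub
    {𝕜 E F : Type*} [NontriviallyNormedField 𝕜] [NormedAddCommGroup E] [NormedSpace 𝕜 E]
    [CompleteSpace E] [NormedAddCommGroup F] [NormedSpace 𝕜 F] [CompleteSpace F]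
    (T : ℕ → E →L[𝕜] F) (hT : ∀ x, Summable fun n => ‖T (n + 1) x - T n x‖) :
    ∃ S : E →L[𝕜] F, ∀ x, Tendsto (fun n => T n x) atTop (𝓝 (S x)) := by
  have hcauchy (x : E) : CauchySeq fun n => T n x :=
    cauchySeq_of_summable_dist (by simpa only [dist_eq_norm'] using hT x)
  choose f hf using fun x => cauchySeq_tendsto_of_complete (hcauchy x)
  exact ⟨continuousLinearMapOfTendsto T (tendsto_pi_nhds.2 hf), hf⟩

theorem summability_criterion_effectiveness_general
    {H : Type*} [NormedAddCommGroup H] [InnerProductSpace ℂ H] [CompleteSpace H]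
    (P : ℕ → H →L[ℂ] H) (hPsa : ∀ n, adjoint (P n) = P n) (hPidem : ∀ n, P n * P n = P n)
    (lam : ℕ → ℝ) (hlam0 : ∀ n, 0 < lam n) (hlam2 : ∀ n, lam n < 2)
    (A : ℕ → H →L[ℂ] H) (hA : ∀ n, A n = 1 - (lam n : ℂ) • P n)
    (T : ℕ → H →L[ℂ] H) (hTsucc : ∀ n, T (n + 1) = A n * T n)
    (hsum : Summable fun n => lam n / (2 - lam n)) :
    ∃ Tinf : H →L[ℂ] H, ∀ x : H,
      Filter.Tendsto (fun n => T n x) Filter.atTop (nhds (Tinf x)) := by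
  have hP (n : ℕ) : IsStarProjection (P n) := ⟨hPidem n, hPsa n⟩
  have hgap (n : ℕ) : 0 < 2 - lam n := sub_pos.2 (hlam2 n)
  have hstep (n : ℕ) (x : H) : T (n + 1) x = T n x - (lam n : ℂ) • P n (T n x) := by
    simp [hTsucc, hA]
  refine exists_tendsto_of_summable_norm_sub T fun x => ?_
  have hloss : Summable fun n => lam n * (2 - lam n) * ‖P n (T n x)‖ ^ 2 :=
    summable_of_sq_norm_succ_eq (x := fun n => T n x)
      (fun n => mul_nonneg (mul_nonneg (hlam0 n).le (hgap n).le) (sq_nonneg _))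
      (fun n => by rw [hstep]; exact (hP n).norm_sub_smul_apply_sq (lam n) _)
  refine (hsum.add hloss).div_const 2 |>.of_nonneg_of_le (fun _ => norm_nonneg _) fun n => ?_
  have hamgm := mul_le_mul_of_nonneg_left
    (two_mul_le_inv_add_mul_sq (hgap n) ‖P n (T n x)‖) (hlam0 n).le
  rw [hstep, sub_sub_cancel_left, norm_neg, norm_smul, Complex.norm_real,
    Real.norm_of_nonneg (hlam0 n).le]
  calc lam n * ‖P n (T n x)‖
      ≤ lam n * ((2 - lam n)⁻¹ + (2 - lam n) * ‖P n (T n x)‖ ^ 2) / 2 := by linarith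
    _ = (lam n / (2 - lam n) + lam n * (2 - lam n) * ‖P n (T n x)‖ ^ 2) / 2 := by ring

/-- **Summability criterion for effectiveness (Theorem 2.4, convergence part).**
If `∑ λₙ/(2-λₙ) < ∞` then the products `T n = (I - λₙPₙ)⋯(I - λ₁P₁)` converge in the
strong operator topology to a bounded operator `T∞`. -/
theorem summability_criterion_effectiveness
    {H : Type*} [NormedAddCommGroup H] [InnerProductSpace ℂ H] [CompleteSpace H]
    (P : ℕ → H →L[ℂ] H) (hPsa : ∀ n, adjoint (P n) = P n) (hPidem : ∀ n, P n * P n = P n)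
    (lam : ℕ → ℝ) (hlam0 : ∀ n, 0 < lam n) (hlam2 : ∀ n, lam n < 2)
    (A : ℕ → H →L[ℂ] H) (hA : ∀ n, A n = 1 - (lam n : ℂ) • P n)
    (T : ℕ → H →L[ℂ] H) (hT0 : T 0 = 1) (hTsucc : ∀ n, T (n + 1) = A n * T n)
    (hsum : Summable fun n => lam n / (2 - lam n)) :
    ∃ Tinf : H →L[ℂ] H, ∀ x : H,
      Filter.Tendsto (fun n => T n x) Filter.atTop (nhds (Tinf x)) :=
  summability_criterion_effectiveness_general P hPsa hPidem lam hlam0 hlam2 A hA T hTsucc hsum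
end

section
/- Let H be a complex Hilbert space, (k_n)_{n≥1} a sequence of nonzero vectors in H, and 0 < λ_n < 2 for all n. Fix f* ∈ H and set y_n := ⟨k_n, f*⟩. Define f_0 := 0 and recursively f_n := f_{n−1} + λ_n (y_n − ⟨k_n, f_{n−1}⟩) k_n/‖k_n‖². Then for every N ≥ 1, ‖f* − f_N‖² = ‖f*‖² − ∑_{n=1}^N λ_n(2−λ_n) |y_n − ⟨k_n, f_{n−1}⟩|² / ‖k_n‖²; in particular ∑_{n=1}^∞ λ_n(2−λ_n) |y_n − ⟨k_n, f_{n−1}⟩|² / ‖k_n‖² ≤ ‖f*‖². -/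
/-!
Writing `e = f* - f` for the error, one relaxed Kaczmarz step subtracts `λ` times the orthogonal
projection of `e` onto the line spanned by `k`. Pythagoras gives the exact loss
`λ(2-λ)|⟨k, e⟩|²/‖k‖²` in `‖e‖²`, and `⟨k, e⟩` is the residual `y - ⟨k, f⟩`. Summing the losses
telescopes from `‖f* - f₀‖² = ‖f*‖²`; since `0 < λ < 2` the losses are nonnegative, so their
series is bounded by `‖f*‖²`.
-/

open scoped InnerProductSpace

section RelaxedProjection

variable {𝕜 H : Type*} [RCLike 𝕜] [NormedAddCommGroup H] [InnerProductSpace 𝕜 H]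

theorem norm_sub_relaxed_proj_sq (e k : H) (lam : ℝ) :
    ‖e - (((lam : 𝕜) * ⟪k, e⟫_𝕜 / ((‖k‖ : 𝕜) ^ 2)) • k)‖ ^ 2
      = ‖e‖ ^ 2 - lam * (2 - lam) * ‖⟪k, e⟫_𝕜‖ ^ 2 / ‖k‖ ^ 2 := by
  -- at `k = 0` both sides are `‖e‖²`, since division by `0` gives `0`
  rcases eq_or_ne k 0 with rfl | hk
  · simp
  have hk' : ‖k‖ ≠ 0 := norm_ne_zero_iff.mpr hk
  set r := ⟪k, e⟫_𝕜
  set c : 𝕜 := (lam : 𝕜) * r / ((‖k‖ : 𝕜) ^ 2) with hc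
  have h_cross : ⟪e, c • k⟫_𝕜 = ((lam * ‖r‖ ^ 2 / ‖k‖ ^ 2 : ℝ) : 𝕜) := by
    have h_conj : ⟪e, k⟫_𝕜 = starRingEnd 𝕜 r := (inner_conj_symm e k).symm
    rw [inner_smul_right, h_conj, hc,
      show (lam : 𝕜) * r / ((‖k‖ : 𝕜) ^ 2) * starRingEnd 𝕜 r
        = lam * (starRingEnd 𝕜 r * r) / ((‖k‖ : 𝕜) ^ 2) by ring, RCLike.conj_mul]
    push_cast
    ring
  have h_proj : ‖c • k‖ ^ 2 = lam ^ 2 * ‖r‖ ^ 2 / ‖k‖ ^ 2 := by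
    rw [norm_smul, norm_div, norm_mul, norm_pow, RCLike.norm_ofReal, RCLike.norm_ofReal,
      abs_norm, mul_pow, div_pow, mul_pow, sq_abs]
    field_simp
  rw [@norm_sub_sq 𝕜, h_cross, RCLike.ofReal_re, h_proj]
  field_simp
  ring

theorem norm_sub_relaxed_kaczmarz_step_sq (fstar g k : H) (lam : ℝ) :
    ‖fstar - (g + (((lam : 𝕜) * (⟪k, fstar⟫_𝕜 - ⟪k, g⟫_𝕜) / ((‖k‖ : 𝕜) ^ 2)) • k))‖ ^ 2
      = ‖fstar - g‖ ^ 2 - lam * (2 - lam) * ‖⟪k, fstar⟫_𝕜 - ⟪k, g⟫_𝕜‖ ^ 2 / ‖k‖ ^ 2 := by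
  rw [← inner_sub_right, ← sub_sub]
  exact norm_sub_relaxed_proj_sq _ _ _

end RelaxedProjection

theorem kaczmarz_interpolation_energy_balance_general
    {H : Type*} [NormedAddCommGroup H] [InnerProductSpace ℂ H]
    (k : ℕ → H)
    (lam : ℕ → ℝ) (hlam0 : ∀ n, 0 < lam n) (hlam2 : ∀ n, lam n < 2)
    (fstar : H) (y : ℕ → ℂ) (hy : ∀ n, y n = inner ℂ (k n) fstar)
    (f : ℕ → H) (hf0 : f 0 = 0)
    (hfrec : ∀ n, f (n + 1) = f n
      + (((lam n : ℂ) * (y n - inner ℂ (k n) (f n)) / ((‖k n‖ : ℂ) ^ 2)) • k n)) :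
    (∀ N : ℕ, 1 ≤ N →
      ‖fstar - f N‖ ^ 2 = ‖fstar‖ ^ 2
        - ∑ n ∈ Finset.range N,
            lam n * (2 - lam n) * ‖y n - (inner ℂ (k n) (f n) : ℂ)‖ ^ 2 / ‖k n‖ ^ 2)
    ∧ (∑' n : ℕ,
        lam n * (2 - lam n) * ‖y n - (inner ℂ (k n) (f n) : ℂ)‖ ^ 2 / ‖k n‖ ^ 2)
        ≤ ‖fstar‖ ^ 2 := by
  set loss : ℕ → ℝ := fun n ↦
    lam n * (2 - lam n) * ‖y n - (inner ℂ (k n) (f n) : ℂ)‖ ^ 2 / ‖k n‖ ^ 2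
  have h_step (n : ℕ) : ‖fstar - f (n + 1)‖ ^ 2 = ‖fstar - f n‖ ^ 2 - loss n := by
    simp only [loss, hfrec, hy]
    exact norm_sub_relaxed_kaczmarz_step_sq (𝕜 := ℂ) fstar (f n) (k n) (lam n)
  have h_balance (N : ℕ) : ‖fstar - f N‖ ^ 2 = ‖fstar‖ ^ 2 - ∑ n ∈ Finset.range N, loss n := by
    have h_telescope := Finset.sum_range_sub (fun n ↦ ‖fstar - f n‖ ^ 2) N
    simp only [h_step, sub_sub_cancel_left, Finset.sum_neg_distrib, hf0, sub_zero] at h_telescope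
    linarith
  refine ⟨fun N _ ↦ h_balance N, Real.tsum_le_of_sum_range_le (fun n ↦ ?_) (fun N ↦ ?_)⟩
  · have := mul_pos (hlam0 n) (sub_pos.mpr (hlam2 n))
    positivity
  · linarith [h_balance N, sq_nonneg ‖fstar - f N‖]

/-- **Exact energy balance for the λₙ-relaxed Kaczmarz interpolation update
(Theorem 3.1).**  `k n` plays the role of the kernel section `k_{x_{n+1}}`
(a nonzero vector of `H`), `lam n` of `λ_{n+1}`, `y n = ⟨kₙ, f*⟩` is the data,
and `f` is the relaxed Kaczmarz recursion started at `f 0 = 0`.  Then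
`‖f* - f_N‖² = ‖f*‖² - ∑_{n=1}^N λₙ(2-λₙ)|yₙ - ⟨kₙ, f_{n-1}⟩|²/‖kₙ‖²`, and in
particular the full series of weighted squared residuals is bounded by `‖f*‖²`. -/
theorem kaczmarz_interpolation_energy_balance
    {H : Type*} [NormedAddCommGroup H] [InnerProductSpace ℂ H] [CompleteSpace H]
    (k : ℕ → H) (hk : ∀ n, k n ≠ 0)
    (lam : ℕ → ℝ) (hlam0 : ∀ n, 0 < lam n) (hlam2 : ∀ n, lam n < 2)
    (fstar : H) (y : ℕ → ℂ) (hy : ∀ n, y n = inner ℂ (k n) fstar)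
    (f : ℕ → H) (hf0 : f 0 = 0)
    (hfrec : ∀ n, f (n + 1) = f n
      + (((lam n : ℂ) * (y n - inner ℂ (k n) (f n)) / ((‖k n‖ : ℂ) ^ 2)) • k n)) :
    (∀ N : ℕ, 1 ≤ N →
      ‖fstar - f N‖ ^ 2 = ‖fstar‖ ^ 2
        - ∑ n ∈ Finset.range N,
            lam n * (2 - lam n) * ‖y n - (inner ℂ (k n) (f n) : ℂ)‖ ^ 2 / ‖k n‖ ^ 2)
    ∧ (∑' n : ℕ,
        lam n * (2 - lam n) * ‖y n - (inner ℂ (k n) (f n) : ℂ)‖ ^ 2 / ‖k n‖ ^ 2)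
        ≤ ‖fstar‖ ^ 2 :=
  kaczmarz_interpolation_energy_balance_general k lam hlam0 hlam2 fstar y hy f hf0 hfrec
end

section
/- Let H be a complex Hilbert space, (k_n)_{n≥1} nonzero vectors in H, 0 < λ_n < 2, and let P_n denote the orthogonal projection onto ℂk_n, P_n f = ⟨k_n, f⟩ k_n/‖k_n‖². Let (Ω, ℱ, ℙ) be a probability space and (ε_n)_{n≥1} an independent family of complex-valued random variables with ε_n ∈ L²(ℙ) and 𝔼[ε_n] = 0 for every n. Fix f* ∈ H, set y_n := ⟨k_n, f*⟩ + ε_n, define the H-valued random variables f_0 := 0 and f_n := f_{n−1} + λ_n (y_n − ⟨k_n, f_{n−1}⟩) k_n/‖k_n‖², and set e_n := f* − f_n. Then for every N ≥ 1, 𝔼‖e_N‖² = ‖f*‖² − ∑_{n=1}^N λ_n(2−λ_n) 𝔼‖P_n e_{n−1}‖² + ∑_{n=1}^N λ_n² 𝔼|ε_n|² / ‖k_n‖². -/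
/-!
Writing `Pₙ` for the projection onto `ℂ kₙ`, the error obeys
`eₙ₊₁ = (1 - λₙ Pₙ) eₙ - εₙ (λₙ / ‖kₙ‖²) kₙ`. Since `Pₙ` is an orthogonal projection,
`‖(1 - λₙ Pₙ) x‖² = ‖x‖² - λₙ (2 - λₙ) ‖Pₙ x‖²`. The error `eₙ` is a function of
`ε₀, …, εₙ₋₁` only, hence independent of the centred noise `εₙ`, so the cross term in
`𝔼‖eₙ₊₁‖²` vanishes. Summing the resulting one-step balance from `e₀ = f*` gives the claim.
-/

open MeasureTheory
open scoped InnerProductSpace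

theorem Submodule.norm_sub_smul_starProjection_sq {𝕜 E : Type*} [RCLike 𝕜] [NormedAddCommGroup E]
    [InnerProductSpace 𝕜 E] (K : Submodule 𝕜 E) [K.HasOrthogonalProjection] (t : ℝ) (x : E) :
    ‖x - (t : 𝕜) • K.starProjection x‖ ^ 2
      = ‖x‖ ^ 2 - t * (2 - t) * ‖K.starProjection x‖ ^ 2 := by
  set p := K.starProjection x
  have horth (s : 𝕜) : ⟪s • p, x - p⟫_𝕜 = 0 := by
    rw [inner_smul_left, inner_eq_zero_symm.1 (K.starProjection_inner_eq_zero x p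
      (K.starProjection_apply_mem x)), mul_zero]
  have hx := norm_add_sq_eq_norm_sq_add_norm_sq_of_inner_eq_zero _ _ (horth 1)
  have hxt := norm_add_sq_eq_norm_sq_add_norm_sq_of_inner_eq_zero _ _ (horth ((1 - t : ℝ) : 𝕜))
  rw [one_smul, add_sub_cancel] at hx
  rw [norm_smul, RCLike.norm_ofReal] at hxt
  have hsplit : x - (t : 𝕜) • p = ((1 - t : ℝ) : 𝕜) • p + (x - p) := by push_cast; module
  rw [hsplit, sq, sq, hxt, hx]
  linear_combination ‖p‖ ^ 2 * sq_abs (1 - t)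

section PastSigmaAlgebra

open ProbabilityTheory

variable {Ω β : Type*} [mβ : MeasurableSpace β] {X : ℕ → Ω → β}

abbrev pastSigmaAlgebra (X : ℕ → Ω → β) (n : ℕ) : MeasurableSpace Ω :=
  ⨆ i < n, mβ.comap (X i)

lemma pastSigmaAlgebra_mono : Monotone (pastSigmaAlgebra X) :=
  fun _ _ hmn => biSup_mono fun _ hi => lt_of_lt_of_le hi hmn

lemma comap_le_pastSigmaAlgebra_succ (n : ℕ) : mβ.comap (X n) ≤ pastSigmaAlgebra X (n + 1) :=
  le_iSup₂ (f := fun i (_ : i < n + 1) => mβ.comap (X i)) n n.lt_succ_self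

variable {mΩ : MeasurableSpace Ω}

lemma pastSigmaAlgebra_le (hX : ∀ n, Measurable (X n)) (n : ℕ) : pastSigmaAlgebra X n ≤ mΩ :=
  iSup₂_le fun i _ => (hX i).comap_le

lemma ProbabilityTheory.iIndepFun.indep_pastSigmaAlgebra {μ : Measure Ω} (hind : iIndepFun X μ)
    (hX : ∀ n, Measurable (X n)) (n : ℕ) :
    Indep (pastSigmaAlgebra X n) (mβ.comap (X n)) μ := by
  simpa using indep_iSup_of_disjoint (fun i => (hX i).comap_le) hind.iIndep
    (S := Set.Iio n) (T := {n}) (by simp)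

end PastSigmaAlgebra

section InnerProductIntegrals

open ProbabilityTheory

variable {Ω 𝕜 E : Type*} [RCLike 𝕜] [NormedAddCommGroup E] [InnerProductSpace 𝕜 E]

lemma integral_inner_smul_eq_zero_of_indep {m mΩ : MeasurableSpace Ω} {μ : Measure[mΩ] Ω}
    (hm : m ≤ mΩ) {V : Ω → E} (hV : StronglyMeasurable[m] V) {η : Ω → 𝕜} (hη : Measurable[mΩ] η)
    (hind : Indep m (MeasurableSpace.comap η inferInstance) μ) (hη0 : ∫ ω, η ω ∂μ = 0) (w : E) :
    ∫ ω, ⟪V ω, η ω • w⟫_𝕜 ∂μ = 0 := by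
  have hVw : StronglyMeasurable[m] fun ω => ⟪V ω, w⟫_𝕜 := hV.inner stronglyMeasurable_const
  have hindep : η ⟂ᵢ[μ] fun ω => ⟪V ω, w⟫_𝕜 :=
    (IndepFun_iff_Indep _ _ _).2 (indep_of_indep_of_le_right hind.symm hVw.measurable.comap_le)
  simp_rw [inner_smul_right]
  rw [hindep.integral_fun_mul_eq_mul_integral hη.aestronglyMeasurable
    (hVw.mono hm).aestronglyMeasurable, hη0, zero_mul]

variable [MeasurableSpace Ω] {μ : Measure Ω}

lemma MeasureTheory.MemLp.integrable_inner {V W : Ω → E} (hV : MemLp V 2 μ) (hW : MemLp W 2 μ) :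
    Integrable (fun ω => ⟪V ω, W ω⟫_𝕜) μ :=
  (L2.integrable_inner (𝕜 := 𝕜) hV.toLp hW.toLp).congr <| by
    filter_upwards [hV.coeFn_toLp, hW.coeFn_toLp] with ω hVω hWω
    rw [hVω, hWω]

lemma integral_norm_sub_sq_of_integral_inner_eq_zero {V W : Ω → E} (hV : MemLp V 2 μ)
    (hW : MemLp W 2 μ) (hVW : ∫ ω, ⟪V ω, W ω⟫_𝕜 ∂μ = 0) :
    ∫ ω, ‖V ω - W ω‖ ^ 2 ∂μ = ∫ ω, ‖V ω‖ ^ 2 ∂μ + ∫ ω, ‖W ω‖ ^ 2 ∂μ := by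
  have hinner := (hV.integrable_inner (𝕜 := 𝕜) hW).re.const_mul 2
  have hdiff : Integrable (fun ω => ‖V ω‖ ^ 2 - 2 * RCLike.re ⟪V ω, W ω⟫_𝕜) μ :=
    hV.norm.integrable_sq.sub hinner
  simp_rw [norm_sub_sq (𝕜 := 𝕜)]
  rw [integral_add hdiff hW.norm.integrable_sq, integral_sub hV.norm.integrable_sq hinner,
    integral_const_mul, integral_re (hV.integrable_inner hW), hVW]
  simp

end InnerProductIntegrals

section NoisyKaczmarz

open ProbabilityTheory

variable {H : Type*} [NormedAddCommGroup H] [InnerProductSpace ℂ H]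

noncomputable def kaczmarzMap (k : H) (t : ℝ) : H →L[ℂ] H :=
  ContinuousLinearMap.id ℂ H - (t : ℂ) • (ℂ ∙ k).starProjection

lemma norm_kaczmarzMap_sq (k x : H) (t : ℝ) :
    ‖kaczmarzMap k t x‖ ^ 2 = ‖x‖ ^ 2 - t * (2 - t) * ‖(ℂ ∙ k).starProjection x‖ ^ 2 :=
  (ℂ ∙ k).norm_sub_smul_starProjection_sq t x

lemma norm_smul_div_norm_sq_smul_sq (k : H) (t : ℝ) (η : ℂ) :
    ‖η • (((t : ℂ) / (‖k‖ : ℂ) ^ 2) • k)‖ ^ 2 = t ^ 2 * ‖η‖ ^ 2 / ‖k‖ ^ 2 := by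
  rcases eq_or_ne k 0 with rfl | hk
  · simp
  have : ‖k‖ ≠ 0 := norm_ne_zero_iff.2 hk
  rw [norm_smul, norm_smul, norm_div, norm_pow, Complex.norm_real, Complex.norm_real, norm_norm,
    Real.norm_eq_abs]
  field_simp
  rw [sq_abs]

/-- `f* - fₙ` for relaxed Kaczmarz from `f₀ = 0` on data `⟨kₙ, f*⟩ + ηₙ`, with `x₀ = f*`. -/
noncomputable def kaczmarzError (k : ℕ → H) (lam : ℕ → ℝ) (x₀ : H) (η : ℕ → ℂ) : ℕ → H
  | 0 => x₀
  | n + 1 => kaczmarzError k lam x₀ η n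
      - ((lam n : ℂ) * (⟪k n, kaczmarzError k lam x₀ η n⟫_ℂ + η n) / (‖k n‖ : ℂ) ^ 2) • k n

lemma kaczmarzError_succ (k : ℕ → H) (lam : ℕ → ℝ) (x₀ : H) (η : ℕ → ℂ) (n : ℕ) :
    kaczmarzError k lam x₀ η (n + 1)
      = kaczmarzMap (k n) (lam n) (kaczmarzError k lam x₀ η n)
        - η n • (((lam n : ℂ) / (‖k n‖ : ℂ) ^ 2) • k n) := by
  simp only [kaczmarzError, kaczmarzMap, sub_apply, ContinuousLinearMap.id_apply, smul_apply,
    Submodule.starProjection_singleton]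
  push_cast
  module

variable {Ω : Type*} {k : ℕ → H} {lam : ℕ → ℝ} {x₀ : H} {ε : ℕ → Ω → ℂ}

lemma stronglyMeasurable_kaczmarzError (n : ℕ) :
    StronglyMeasurable[pastSigmaAlgebra ε n] fun ω => kaczmarzError k lam x₀ (ε · ω) n := by
  induction n with
  | zero => exact stronglyMeasurable_const
  | succ n ih =>
    have hε : Measurable[pastSigmaAlgebra ε (n + 1)] (ε n) :=
      Measurable.of_comap_le (comap_le_pastSigmaAlgebra_succ n)
    have hx := ih.mono (pastSigmaAlgebra_mono n.le_succ)
    have hinner : Measurable[pastSigmaAlgebra ε (n + 1)]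
        fun ω => ⟪k n, kaczmarzError k lam x₀ (ε · ω) n⟫_ℂ :=
      (stronglyMeasurable_const.inner hx).measurable
    simp only [kaczmarzError]
    exact hx.sub ((((hinner.add hε).const_mul _).div_const _).stronglyMeasurable.smul_const _)

variable [MeasurableSpace Ω] {μ : Measure Ω}

lemma memLp_kaczmarzError [IsFiniteMeasure μ] (hε : ∀ n, MemLp (ε n) 2 μ) (n : ℕ) :
    MemLp (fun ω => kaczmarzError k lam x₀ (ε · ω) n) 2 μ := by
  induction n with
  | zero => exact memLp_const x₀
  | succ n ih =>
    simp_rw [kaczmarzError_succ]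
    exact (kaczmarzMap (k n) (lam n)).comp_memLp' ih |>.sub
      ((ContinuousLinearMap.toSpanSingleton ℂ _).comp_memLp' (hε n))

lemma integral_norm_sq_kaczmarzError_succ [IsFiniteMeasure μ] (hmeas : ∀ n, Measurable (ε n))
    (hL2 : ∀ n, MemLp (ε n) 2 μ) (hmean : ∀ n, ∫ ω, ε n ω ∂μ = 0) (hindep : iIndepFun ε μ)
    (n : ℕ) :
    ∫ ω, ‖kaczmarzError k lam x₀ (ε · ω) (n + 1)‖ ^ 2 ∂μ
      = ∫ ω, ‖kaczmarzError k lam x₀ (ε · ω) n‖ ^ 2 ∂μ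
        - lam n * (2 - lam n)
          * ∫ ω, ‖(ℂ ∙ k n).starProjection (kaczmarzError k lam x₀ (ε · ω) n)‖ ^ 2 ∂μ
        + lam n ^ 2 * (∫ ω, ‖ε n ω‖ ^ 2 ∂μ) / ‖k n‖ ^ 2 := by
  set x := fun ω => kaczmarzError k lam x₀ (ε · ω) n
  set L := kaczmarzMap (k n) (lam n)
  set w := ((lam n : ℂ) / (‖k n‖ : ℂ) ^ 2) • k n
  have hx : MemLp x 2 μ := memLp_kaczmarzError hL2 n
  have hLx : MemLp (fun ω => L (x ω)) 2 μ := L.comp_memLp' hx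
  have hεw : MemLp (fun ω => ε n ω • w) 2 μ :=
    (ContinuousLinearMap.toSpanSingleton ℂ w).comp_memLp' (hL2 n)
  have hPx : MemLp (fun ω => (ℂ ∙ k n).starProjection (x ω)) 2 μ :=
    ((ℂ ∙ k n).starProjection).comp_memLp' hx
  have hcross : ∫ ω, ⟪L (x ω), ε n ω • w⟫_ℂ ∂μ = 0 :=
    integral_inner_smul_eq_zero_of_indep (pastSigmaAlgebra_le hmeas n)
      (L.continuous.comp_stronglyMeasurable (stronglyMeasurable_kaczmarzError n)) (hmeas n)
      (hindep.indep_pastSigmaAlgebra hmeas n) (hmean n) w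
  have hLx_sq (ω : Ω) : ‖L (x ω)‖ ^ 2
      = ‖x ω‖ ^ 2 - lam n * (2 - lam n) * ‖(ℂ ∙ k n).starProjection (x ω)‖ ^ 2 :=
    norm_kaczmarzMap_sq _ _ _
  have hεw_sq (ω : Ω) : ‖ε n ω • w‖ ^ 2 = lam n ^ 2 * ‖ε n ω‖ ^ 2 / ‖k n‖ ^ 2 :=
    norm_smul_div_norm_sq_smul_sq _ _ _
  simp_rw [kaczmarzError_succ]
  rw [integral_norm_sub_sq_of_integral_inner_eq_zero hLx hεw hcross]
  simp only [hLx_sq, hεw_sq]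
  rw [integral_sub hx.norm.integrable_sq (hPx.norm.integrable_sq.const_mul _), integral_const_mul,
    integral_div, integral_const_mul]

theorem integral_norm_sq_kaczmarzError [IsProbabilityMeasure μ] (hmeas : ∀ n, Measurable (ε n))
    (hL2 : ∀ n, MemLp (ε n) 2 μ) (hmean : ∀ n, ∫ ω, ε n ω ∂μ = 0) (hindep : iIndepFun ε μ)
    (N : ℕ) :
    ∫ ω, ‖kaczmarzError k lam x₀ (ε · ω) N‖ ^ 2 ∂μ
      = ‖x₀‖ ^ 2
        - (∑ n ∈ Finset.range N, lam n * (2 - lam n)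
            * ∫ ω, ‖(ℂ ∙ k n).starProjection (kaczmarzError k lam x₀ (ε · ω) n)‖ ^ 2 ∂μ)
        + ∑ n ∈ Finset.range N, lam n ^ 2 * (∫ ω, ‖ε n ω‖ ^ 2 ∂μ) / ‖k n‖ ^ 2 := by
  induction N with
  | zero => simp [kaczmarzError]
  | succ N ih =>
    rw [integral_norm_sq_kaczmarzError_succ hmeas hL2 hmean hindep, ih, Finset.sum_range_succ,
      Finset.sum_range_succ]
    ring

end NoisyKaczmarz

theorem noisy_kaczmarz_expected_energy_balance_general
    {H : Type*} [NormedAddCommGroup H] [InnerProductSpace ℂ H]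
    {Ω : Type*} [MeasurableSpace Ω] (ℙ : Measure Ω) [IsProbabilityMeasure ℙ]
    (k : ℕ → H)
    (lam : ℕ → ℝ)
    (ε : ℕ → Ω → ℂ) (hmeas : ∀ n, Measurable (ε n))
    (hL2 : ∀ n, MemLp (ε n) 2 ℙ)
    (hmean : ∀ n, ∫ ω, ε n ω ∂ℙ = 0)
    (hindep : ProbabilityTheory.iIndepFun ε ℙ)
    (fstar : H) (y : ℕ → Ω → ℂ) (hy : ∀ n ω, y n ω = inner ℂ (k n) fstar + ε n ω)
    (f : ℕ → Ω → H) (hf0 : ∀ ω, f 0 ω = 0)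
    (hfrec : ∀ n ω, f (n + 1) ω = f n ω
      + (((lam n : ℂ) * (y n ω - inner ℂ (k n) (f n ω)) / ((‖k n‖ : ℂ) ^ 2)) • k n))
    (e : ℕ → Ω → H) (he : ∀ n ω, e n ω = fstar - f n ω)
    (P : ℕ → H → H)
    (hP : ∀ n g, P n g = (((inner ℂ (k n) g : ℂ)) / ((‖k n‖ : ℂ) ^ 2)) • k n)
    (N : ℕ) :
    ∫ ω, ‖e N ω‖ ^ 2 ∂ℙ
      = ‖fstar‖ ^ 2
        - (∑ n ∈ Finset.range N,
            lam n * (2 - lam n) * ∫ ω, ‖P n (e n ω)‖ ^ 2 ∂ℙ)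
        + ∑ n ∈ Finset.range N,
            (lam n) ^ 2 * (∫ ω, ‖ε n ω‖ ^ 2 ∂ℙ) / ‖k n‖ ^ 2 := by
  have he_eq (n : ℕ) (ω : Ω) : e n ω = kaczmarzError k lam fstar (ε · ω) n := by
    induction n with
    | zero => rw [he, hf0, sub_zero, kaczmarzError]
    | succ n ih =>
      rw [kaczmarzError, ← ih, he, he, hfrec, hy, inner_sub_right, sub_add_eq_sub_sub]
      congr 3
      ring
  have hP_eq (n : ℕ) (g : H) : P n g = (ℂ ∙ k n).starProjection g := by
    rw [hP, Submodule.starProjection_singleton]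
    push_cast
    rfl
  simp only [he_eq, hP_eq]
  exact integral_norm_sq_kaczmarzError hmeas hL2 hmean hindep N

/-- **Expected energy balance under additive noise (Proposition 3.3).**
`k n` is the kernel section `k_{x_{n+1}}`, `P n` the orthogonal projection onto
`ℂ kₙ`, the noises `ε n` are independent, mean-zero and square-integrable, the data
are `yₙ = ⟨kₙ, f*⟩ + εₙ`, `f` is the relaxed Kaczmarz recursion with `f 0 = 0`, and
`eₙ = f* - fₙ`.  Then `𝔼‖e_N‖² = ‖f*‖² - ∑_{n=1}^N λₙ(2-λₙ) 𝔼‖Pₙ e_{n-1}‖²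
+ ∑_{n=1}^N λₙ² 𝔼|εₙ|² / ‖kₙ‖²`. -/
theorem noisy_kaczmarz_expected_energy_balance
    {H : Type*} [NormedAddCommGroup H] [InnerProductSpace ℂ H] [CompleteSpace H]
    {Ω : Type*} [MeasurableSpace Ω] (ℙ : Measure Ω) [IsProbabilityMeasure ℙ]
    (k : ℕ → H) (hk : ∀ n, k n ≠ 0)
    (lam : ℕ → ℝ) (hlam0 : ∀ n, 0 < lam n) (hlam2 : ∀ n, lam n < 2)
    (ε : ℕ → Ω → ℂ) (hmeas : ∀ n, Measurable (ε n))
    (hL2 : ∀ n, MemLp (ε n) 2 ℙ)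
    (hmean : ∀ n, ∫ ω, ε n ω ∂ℙ = 0)
    (hindep : ProbabilityTheory.iIndepFun ε ℙ)
    (fstar : H) (y : ℕ → Ω → ℂ) (hy : ∀ n ω, y n ω = inner ℂ (k n) fstar + ε n ω)
    (f : ℕ → Ω → H) (hf0 : ∀ ω, f 0 ω = 0)
    (hfrec : ∀ n ω, f (n + 1) ω = f n ω
      + (((lam n : ℂ) * (y n ω - inner ℂ (k n) (f n ω)) / ((‖k n‖ : ℂ) ^ 2)) • k n))
    (e : ℕ → Ω → H) (he : ∀ n ω, e n ω = fstar - f n ω)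
    (P : ℕ → H → H)
    (hP : ∀ n g, P n g = (((inner ℂ (k n) g : ℂ)) / ((‖k n‖ : ℂ) ^ 2)) • k n)
    (N : ℕ) (hN : 1 ≤ N) :
    ∫ ω, ‖e N ω‖ ^ 2 ∂ℙ
      = ‖fstar‖ ^ 2
        - (∑ n ∈ Finset.range N,
            lam n * (2 - lam n) * ∫ ω, ‖P n (e n ω)‖ ^ 2 ∂ℙ)
        + ∑ n ∈ Finset.range N,
            (lam n) ^ 2 * (∫ ω, ‖ε n ω‖ ^ 2 ∂ℙ) / ‖k n‖ ^ 2 :=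
  noisy_kaczmarz_expected_energy_balance_general ℙ k lam ε hmeas hL2 hmean hindep fstar y hy f hf0
    hfrec e he P hP N
end

section
/- In addition to the hypotheses of the noisy recursion (independent mean-zero noises ε_n ∈ L² driving f_n := f_{n−1} + λ_n (⟨k_n, f*⟩ + ε_n − ⟨k_n, f_{n−1}⟩) k_n/‖k_n‖², f_0 = 0, e_n := f* − f_n, 0 < λ_n < 2), assume there are constants κ > 0 and σ ≥ 0 such that ‖k_n‖² ≥ κ and 𝔼|ε_n|² ≤ σ² for all n ≥ 1. Then for every N ≥ 1, 𝔼‖e_N‖² ≤ ‖f*‖² + (σ²/κ) ∑_{n=1}^N λ_n². In particular, if ∑_{n=1}^∞ λ_n² < ∞, then sup_{N≥1} 𝔼‖e_N‖² < ∞. -/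
/-!
The error satisfies `e (n + 1) = Pₙ (e n) - εₙ • dₙ`, where `Pₙ x = x - (λₙ ⟪kₙ, x⟫ / ‖kₙ‖²) • kₙ`
is a relaxed projection, hence a contraction for `0 ≤ λₙ ≤ 2`, and `dₙ = (λₙ / ‖kₙ‖²) • kₙ`.
As `e n` is a function of `ε₀, …, εₙ₋₁`, the centred noise `εₙ` is independent of it, so the cross
term vanishes in expectation and
`𝔼‖e (n + 1)‖² = 𝔼‖Pₙ (e n)‖² + λₙ² / ‖kₙ‖² · 𝔼|εₙ|² ≤ 𝔼‖e n‖² + (σ² / κ) λₙ²`.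
Summing from `e 0 = f*` gives the bound.
-/

open MeasureTheory

section RelaxedProjection

variable {𝕜 E : Type*} [RCLike 𝕜] [NormedAddCommGroup E] [InnerProductSpace 𝕜 E]

local notation "⟪" x ", " y "⟫" => inner 𝕜 x y

variable (𝕜) in
def relaxedProj (k : E) (l : ℝ) (x : E) : E := x - ((l : 𝕜) * ⟪k, x⟫ / (‖k‖ : 𝕜) ^ 2) • k

theorem norm_relaxedProj_sq (k x : E) (l : ℝ) :
    ‖relaxedProj 𝕜 k l x‖ ^ 2 = ‖x‖ ^ 2 - l * (2 - l) * ‖⟪k, x⟫‖ ^ 2 / ‖k‖ ^ 2 := by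
  rcases eq_or_ne k 0 with rfl | hk
  · simp [relaxedProj]
  have hk' : ‖k‖ ≠ 0 := by simpa using hk
  have hcross : ⟪x, ((l : 𝕜) * ⟪k, x⟫ / (‖k‖ : 𝕜) ^ 2) • k⟫
      = ((l * ‖⟪k, x⟫‖ ^ 2 / ‖k‖ ^ 2 : ℝ) : 𝕜) := by
    rw [inner_smul_right, ← inner_conj_symm x k, mul_div_right_comm, mul_assoc, RCLike.mul_conj]
    push_cast
    ring
  rw [relaxedProj, @norm_sub_sq 𝕜, hcross, RCLike.ofReal_re, norm_smul, norm_div, norm_mul]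
  simp only [RCLike.norm_ofReal, norm_pow, abs_norm]
  field_simp
  rw [sq_abs]
  ring

theorem norm_relaxedProj_le (k x : E) {l : ℝ} (hl₀ : 0 ≤ l) (hl₂ : l ≤ 2) :
    ‖relaxedProj 𝕜 k l x‖ ≤ ‖x‖ := by
  have hdrop : 0 ≤ l * (2 - l) * ‖⟪k, x⟫‖ ^ 2 / ‖k‖ ^ 2 := by
    have := sub_nonneg.2 hl₂
    positivity
  refine (pow_le_pow_iff_left₀ (norm_nonneg _) (norm_nonneg _) two_ne_zero).1 ?_
  rw [norm_relaxedProj_sq]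
  linarith

variable (𝕜) in
theorem continuous_relaxedProj (k : E) (l : ℝ) : Continuous (relaxedProj 𝕜 k l) := by
  unfold relaxedProj
  fun_prop

theorem norm_div_sq_smul_sq (k : E) (l : ℝ) :
    ‖((l : 𝕜) / (‖k‖ : 𝕜) ^ 2) • k‖ ^ 2 = l ^ 2 / ‖k‖ ^ 2 := by
  rcases eq_or_ne k 0 with rfl | hk
  · simp
  have hk' : ‖k‖ ≠ 0 := by simpa using hk
  rw [norm_smul, norm_div, norm_pow, RCLike.norm_ofReal, RCLike.norm_ofReal, abs_norm]
  field_simp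
  simp [sq_abs]

end RelaxedProjection

section Orthogonality

open ProbabilityTheory

variable {𝕜 E Ω : Type*} [RCLike 𝕜] [NormedAddCommGroup E] [InnerProductSpace 𝕜 E]
  [MeasurableSpace Ω] {μ : Measure Ω}

local notation "⟪" x ", " y "⟫" => inner 𝕜 x y

theorem integral_norm_sub_smul_sq_of_indepFun {A : Ω → E} {ξ : Ω → 𝕜} (v : E)
    (hA : MemLp A 2 μ) (hξ : MemLp ξ 2 μ) (hξ₀ : ∫ ω, ξ ω ∂μ = 0)
    (hind : IndepFun (fun ω ↦ ⟪A ω, v⟫) ξ μ) :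
    ∫ ω, ‖A ω - ξ ω • v‖ ^ 2 ∂μ = ∫ ω, ‖A ω‖ ^ 2 ∂μ + ‖v‖ ^ 2 * ∫ ω, ‖ξ ω‖ ^ 2 ∂μ := by
  have hAv : MemLp (fun ω ↦ ⟪A ω, v⟫) 2 μ := hA.inner_const v
  have hcross : Integrable (fun ω ↦ ξ ω * ⟪A ω, v⟫) μ := hξ.integrable_mul hAv
  have hcross₀ : ∫ ω, ξ ω * ⟪A ω, v⟫ ∂μ = 0 := by
    rw [hind.symm.integral_fun_mul_eq_mul_integral hξ.1 hAv.1, hξ₀, zero_mul]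
  have hexpand (ω : Ω) : ‖A ω - ξ ω • v‖ ^ 2
      = ‖A ω‖ ^ 2 - 2 * RCLike.re (ξ ω * ⟪A ω, v⟫) + ‖v‖ ^ 2 * ‖ξ ω‖ ^ 2 := by
    rw [@norm_sub_sq 𝕜, inner_smul_right, norm_smul, mul_pow, mul_comm (‖ξ ω‖ ^ 2)]
  simp_rw [hexpand]
  rw [integral_add, integral_sub, integral_const_mul, integral_const_mul, integral_re hcross,
    hcross₀, map_zero, mul_zero, sub_zero]
  · exact hA.norm.integrable_sq
  · exact hcross.re.const_mul 2
  · exact hA.norm.integrable_sq.sub (hcross.re.const_mul 2)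
  · exact hξ.norm.integrable_sq.const_mul _

end Orthogonality

section Past

open ProbabilityTheory

variable {Ω β : Type*} [mβ : MeasurableSpace β]

abbrev pastSigma (ε : ℕ → Ω → β) (n : ℕ) : MeasurableSpace Ω :=
  ⨆ i ∈ Set.Iio n, mβ.comap (ε i)

theorem pastSigma_mono (ε : ℕ → Ω → β) : Monotone (pastSigma ε) :=
  fun _ _ hmn ↦ biSup_mono fun _ hi ↦ hi.trans_le hmn

theorem measurable_pastSigma_succ (ε : ℕ → Ω → β) (n : ℕ) :
    Measurable[pastSigma ε (n + 1)] (ε n) :=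
  Measurable.of_comap_le <| le_iSup₂ (f := fun i (_ : i ∈ Set.Iio (n + 1)) ↦ mβ.comap (ε i))
    n (Nat.lt_succ_self n)

theorem pastSigma_le [MeasurableSpace Ω] {ε : ℕ → Ω → β} (hε : ∀ i, Measurable (ε i)) (n : ℕ) :
    pastSigma ε n ≤ ‹MeasurableSpace Ω› :=
  iSup₂_le fun i _ ↦ (hε i).comap_le

theorem ProbabilityTheory.iIndepFun.indepFun_of_measurable_pastSigma [MeasurableSpace Ω]
    {μ : Measure Ω} {ε : ℕ → Ω → β} (hindep : iIndepFun ε μ) (hε : ∀ i, Measurable (ε i))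
    {γ : Type*} [MeasurableSpace γ] {X : Ω → γ} {n : ℕ} (hX : Measurable[pastSigma ε n] X) : IndepFun X (ε n) μ := by
  have h := indep_iSup_of_disjoint (fun i ↦ (hε i).comap_le)
    ((iIndepFun_iff_iIndep _ _ _).1 hindep) (S := Set.Iio n) (T := {n}) (by simp)
  rw [iSup_singleton] at h
  exact (IndepFun_iff_Indep _ _ _).2 (indep_of_indep_of_le_left h hX.comap_le)

end Past

section KaczmarzError

open ProbabilityTheory

variable {𝕜 E Ω : Type*} [RCLike 𝕜] [NormedAddCommGroup E] [InnerProductSpace 𝕜 E]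
  {k : ℕ → E} {lam : ℕ → ℝ} {ε : ℕ → Ω → 𝕜} {e : ℕ → Ω → E} {x₀ : E}

def IsNoisyKaczmarzError (k : ℕ → E) (lam : ℕ → ℝ) (ε : ℕ → Ω → 𝕜) (e : ℕ → Ω → E) : Prop :=
  ∀ n ω, e (n + 1) ω
    = relaxedProj 𝕜 (k n) (lam n) (e n ω) - ε n ω • (((lam n : 𝕜) / (‖k n‖ : 𝕜) ^ 2) • k n)

variable (𝕜) in
theorem MeasureTheory.MemLp.relaxedProj [MeasurableSpace Ω] {μ : Measure Ω} {f : Ω → E}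
    {p : ENNReal} (hf : MemLp f p μ) (k : E) {l : ℝ} (hl₀ : 0 ≤ l) (hl₂ : l ≤ 2) :
    MemLp (fun ω ↦ relaxedProj 𝕜 k l (f ω)) p μ :=
  hf.of_le ((continuous_relaxedProj 𝕜 k l).comp_aestronglyMeasurable hf.1)
    (.of_forall fun ω ↦ by simpa using norm_relaxedProj_le k (f ω) hl₀ hl₂)

namespace IsNoisyKaczmarzError

theorem stronglyMeasurable_pastSigma (hrec : IsNoisyKaczmarzError k lam ε e)
    (he₀ : ∀ ω, e 0 ω = x₀) (n : ℕ) : StronglyMeasurable[pastSigma ε n] (e n) := by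
  induction n with
  | zero =>
    rw [show e 0 = fun _ ↦ x₀ from funext he₀]
    exact stronglyMeasurable_const
  | succ n ih =>
    rw [show e (n + 1) = _ from funext (hrec n)]
    exact ((continuous_relaxedProj 𝕜 _ _).comp_stronglyMeasurable
      (ih.mono (pastSigma_mono ε n.le_succ))).sub
      ((measurable_pastSigma_succ ε n).stronglyMeasurable.smul_const _)

variable [MeasurableSpace Ω] {μ : Measure Ω}

theorem memLp_two [IsFiniteMeasure μ] (hrec : IsNoisyKaczmarzError k lam ε e)
    (he₀ : ∀ ω, e 0 ω = x₀) (hε₂ : ∀ n, MemLp (ε n) 2 μ)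
    (hlam₀ : ∀ n, 0 ≤ lam n) (hlam₂ : ∀ n, lam n ≤ 2) (n : ℕ) : MemLp (e n) 2 μ := by
  induction n with
  | zero =>
    rw [show e 0 = fun _ ↦ x₀ from funext he₀]
    exact memLp_const x₀
  | succ n ih =>
    rw [show e (n + 1) = _ from funext (hrec n)]
    exact (ih.relaxedProj 𝕜 (k n) (hlam₀ n) (hlam₂ n)).sub ((memLp_top_const _).smul (hε₂ n))

variable [IsProbabilityMeasure μ]

theorem integral_norm_sq_succ_le (hrec : IsNoisyKaczmarzError k lam ε e)
    (he₀ : ∀ ω, e 0 ω = x₀) (hε : ∀ n, Measurable (ε n)) (hε₂ : ∀ n, MemLp (ε n) 2 μ)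
    (hmean : ∀ n, ∫ ω, ε n ω ∂μ = 0) (hindep : iIndepFun ε μ)
    (hlam₀ : ∀ n, 0 ≤ lam n) (hlam₂ : ∀ n, lam n ≤ 2) (n : ℕ) :
    ∫ ω, ‖e (n + 1) ω‖ ^ 2 ∂μ
      ≤ ∫ ω, ‖e n ω‖ ^ 2 ∂μ + lam n ^ 2 / ‖k n‖ ^ 2 * ∫ ω, ‖ε n ω‖ ^ 2 ∂μ := by
  have he₂ := hrec.memLp_two he₀ hε₂ hlam₀ hlam₂ n
  have hA := he₂.relaxedProj 𝕜 (k n) (hlam₀ n) (hlam₂ n)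
  have hind := hindep.indepFun_of_measurable_pastSigma hε
    (((continuous_relaxedProj 𝕜 (k n) (lam n)).inner (𝕜 := 𝕜)
      (continuous_const (y := ((lam n : 𝕜) / (‖k n‖ : 𝕜) ^ 2) • k n))).comp_stronglyMeasurable
      (hrec.stronglyMeasurable_pastSigma he₀ n)).measurable
  rw [show e (n + 1) = _ from funext (hrec n),
    integral_norm_sub_smul_sq_of_indepFun _ hA (hε₂ n) (hmean n) hind, norm_div_sq_smul_sq]
  gcongr ?_ + _
  refine integral_mono hA.norm.integrable_sq he₂.norm.integrable_sq fun ω ↦ ?_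
  exact pow_le_pow_left₀ (norm_nonneg _) (norm_relaxedProj_le _ _ (hlam₀ n) (hlam₂ n)) 2

theorem integral_norm_sq_le (hrec : IsNoisyKaczmarzError k lam ε e)
    (he₀ : ∀ ω, e 0 ω = x₀) (hε : ∀ n, Measurable (ε n)) (hε₂ : ∀ n, MemLp (ε n) 2 μ)
    (hmean : ∀ n, ∫ ω, ε n ω ∂μ = 0) (hindep : iIndepFun ε μ)
    (hlam₀ : ∀ n, 0 ≤ lam n) (hlam₂ : ∀ n, lam n ≤ 2)
    {κ σ : ℝ} (hκ : 0 < κ) (hkκ : ∀ n, κ ≤ ‖k n‖ ^ 2) (hεσ : ∀ n, ∫ ω, ‖ε n ω‖ ^ 2 ∂μ ≤ σ ^ 2)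
    (N : ℕ) :
    ∫ ω, ‖e N ω‖ ^ 2 ∂μ ≤ ‖x₀‖ ^ 2 + σ ^ 2 / κ * ∑ n ∈ Finset.range N, lam n ^ 2 := by
  induction N with
  | zero => simp [he₀]
  | succ N ih =>
    have hnoise : lam N ^ 2 / ‖k N‖ ^ 2 * ∫ ω, ‖ε N ω‖ ^ 2 ∂μ ≤ σ ^ 2 / κ * lam N ^ 2 :=
      calc lam N ^ 2 / ‖k N‖ ^ 2 * ∫ ω, ‖ε N ω‖ ^ 2 ∂μ ≤ lam N ^ 2 / κ * σ ^ 2 := by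
            gcongr
            exacts [hkκ N, hεσ N]
        _ = σ ^ 2 / κ * lam N ^ 2 := by ring
    rw [Finset.sum_range_succ]
    linarith [hrec.integral_norm_sq_succ_le he₀ hε hε₂ hmean hindep hlam₀ hlam₂ N]

end IsNoisyKaczmarzError

end KaczmarzError

theorem noisy_kaczmarz_expected_error_bound_general
    {H : Type*} [NormedAddCommGroup H] [InnerProductSpace ℂ H]
    {Ω : Type*} [MeasurableSpace Ω] (ℙ : Measure Ω) [IsProbabilityMeasure ℙ]
    (k : ℕ → H)
    (lam : ℕ → ℝ) (hlam0 : ∀ n, 0 < lam n) (hlam2 : ∀ n, lam n < 2)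
    (ε : ℕ → Ω → ℂ) (hmeas : ∀ n, Measurable (ε n))
    (hL2 : ∀ n, MemLp (ε n) 2 ℙ)
    (hmean : ∀ n, ∫ ω, ε n ω ∂ℙ = 0)
    (hindep : ProbabilityTheory.iIndepFun ε ℙ)
    (fstar : H) (y : ℕ → Ω → ℂ) (hy : ∀ n ω, y n ω = inner ℂ (k n) fstar + ε n ω)
    (f : ℕ → Ω → H) (hf0 : ∀ ω, f 0 ω = 0)
    (hfrec : ∀ n ω, f (n + 1) ω = f n ω
      + (((lam n : ℂ) * (y n ω - inner ℂ (k n) (f n ω)) / ((‖k n‖ : ℂ) ^ 2)) • k n))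
    (e : ℕ → Ω → H) (he : ∀ n ω, e n ω = fstar - f n ω)
    (κ : ℝ) (hκ : 0 < κ) (hkκ : ∀ n, κ ≤ ‖k n‖ ^ 2)
    (σ : ℝ) (hεσ : ∀ n, ∫ ω, ‖ε n ω‖ ^ 2 ∂ℙ ≤ σ ^ 2) :
    (∀ N : ℕ, 1 ≤ N →
      ∫ ω, ‖e N ω‖ ^ 2 ∂ℙ
        ≤ ‖fstar‖ ^ 2 + σ ^ 2 / κ * ∑ n ∈ Finset.range N, (lam n) ^ 2)
    ∧ ((Summable fun n => (lam n) ^ 2) →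
        BddAbove (Set.range fun N : ℕ => ∫ ω, ‖e N ω‖ ^ 2 ∂ℙ)) := by
  have he₀ (ω : Ω) : e 0 ω = fstar := by rw [he, hf0, sub_zero]
  have hrec : IsNoisyKaczmarzError k lam ε e := fun n ω ↦ by
    rw [he, hfrec, hy, he, relaxedProj, inner_sub_right]
    module
  have hbound := hrec.integral_norm_sq_le he₀ hmeas hL2 hmean hindep (fun n ↦ (hlam0 n).le)
    (fun n ↦ (hlam2 n).le) hκ hkκ hεσ
  refine ⟨fun N _ ↦ hbound N, fun hsum ↦ ⟨‖fstar‖ ^ 2 + σ ^ 2 / κ * ∑' n, lam n ^ 2, ?_⟩⟩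
  rintro _ ⟨N, rfl⟩
  refine (hbound N).trans ?_
  gcongr
  exact hsum.sum_le_tsum _ fun n _ ↦ sq_nonneg (lam n)

/-- **A priori bound on the expected error under noise (Corollary 3.4).**
Under the hypotheses of the noisy Kaczmarz recursion, if moreover `‖kₙ‖² ≥ κ > 0`
and `𝔼|εₙ|² ≤ σ²` for all `n`, then `𝔼‖e_N‖² ≤ ‖f*‖² + (σ²/κ) ∑_{n=1}^N λₙ²`;
in particular, if `∑ λₙ² < ∞` then `sup_N 𝔼‖e_N‖² < ∞`. -/
theorem noisy_kaczmarz_expected_error_bound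
    {H : Type*} [NormedAddCommGroup H] [InnerProductSpace ℂ H] [CompleteSpace H]
    {Ω : Type*} [MeasurableSpace Ω] (ℙ : Measure Ω) [IsProbabilityMeasure ℙ]
    (k : ℕ → H) (hk : ∀ n, k n ≠ 0)
    (lam : ℕ → ℝ) (hlam0 : ∀ n, 0 < lam n) (hlam2 : ∀ n, lam n < 2)
    (ε : ℕ → Ω → ℂ) (hmeas : ∀ n, Measurable (ε n))
    (hL2 : ∀ n, MemLp (ε n) 2 ℙ)
    (hmean : ∀ n, ∫ ω, ε n ω ∂ℙ = 0)
    (hindep : ProbabilityTheory.iIndepFun ε ℙ)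
    (fstar : H) (y : ℕ → Ω → ℂ) (hy : ∀ n ω, y n ω = inner ℂ (k n) fstar + ε n ω)
    (f : ℕ → Ω → H) (hf0 : ∀ ω, f 0 ω = 0)
    (hfrec : ∀ n ω, f (n + 1) ω = f n ω
      + (((lam n : ℂ) * (y n ω - inner ℂ (k n) (f n ω)) / ((‖k n‖ : ℂ) ^ 2)) • k n))
    (e : ℕ → Ω → H) (he : ∀ n ω, e n ω = fstar - f n ω)
    (κ : ℝ) (hκ : 0 < κ) (hkκ : ∀ n, κ ≤ ‖k n‖ ^ 2)
    (σ : ℝ) (hσ : 0 ≤ σ) (hεσ : ∀ n, ∫ ω, ‖ε n ω‖ ^ 2 ∂ℙ ≤ σ ^ 2) :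
    (∀ N : ℕ, 1 ≤ N →
      ∫ ω, ‖e N ω‖ ^ 2 ∂ℙ
        ≤ ‖fstar‖ ^ 2 + σ ^ 2 / κ * ∑ n ∈ Finset.range N, (lam n) ^ 2)
    ∧ ((Summable fun n => (lam n) ^ 2) →
        BddAbove (Set.range fun N : ℕ => ∫ ω, ‖e N ω‖ ^ 2 ∂ℙ)) :=
  noisy_kaczmarz_expected_error_bound_general ℙ k lam hlam0 hlam2 ε hmeas hL2 hmean hindep fstar y
    hy f hf0 hfrec e he κ hκ hkκ σ hεσ
end

section
/- Let H be a complex Hilbert space, A_1, …, A_d bounded operators with ∑_{i=1}^d A_i* A_i ≤ I, D := (I − ∑_{i=1}^d A_i* A_i)^{1/2}, X a set, Φ₀ : X → H a map, k₀(x,y) := ⟨Φ₀(x), Φ₀(y)⟩, and for integers 0 ≤ M ≤ N let k̃_M(x,y) := ∑_{|α|<M} ⟨D A_α Φ₀(x), D A_α Φ₀(y)⟩ and R_{N,M}(x) := ∑_{|α|=N} ‖A_α Φ₀(x)‖² + ∑_{M≤|α|<N} ‖D A_α Φ₀(x)‖². Then for all x ∈ X, k₀(x,x) − k̃_M(x,x)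 = R_{N,M}(x) ≥ 0, and for all x, y ∈ X, |k₀(x,y) − k̃_M(x,y)| ≤ (R_{N,M}(x) R_{N,M}(y))^{1/2}. -/
/-!
Since `D² = I - ∑ Aᵢ* Aᵢ`, every inner product splits as
`⟨u, v⟩ = ∑ᵢ ⟨Aᵢ u, Aᵢ v⟩ + ⟨D u, D v⟩`. Iterating this along words telescopes to
`⟨u, v⟩ = ∑_{|α| = N} ⟨A_α u, A_α v⟩ + ∑_{|α| < N} ⟨D A_α u, D A_α v⟩`, so the truncation error
`k₀ - k̃_M` is itself a finite sum of inner products whose diagonal is `R_{N,M}`; the bound is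
Cauchy–Schwarz for that sum.
-/

open ContinuousLinearMap

/-- The operator `A_α = A_{i_n} ⋯ A_{i_1}` attached to the word `α = i_1 ⋯ i_n`;
the word is encoded as the list `[i_n, …, i_1]` (most recently applied letter first). -/
noncomputable def Aword {H : Type*} [NormedAddCommGroup H] [InnerProductSpace ℂ H]
    {d : ℕ} (A : Fin d → H →L[ℂ] H) : List (Fin d) → H →L[ℂ] H
  | [] => 1
  | i :: w => A i * Aword A w

section InnerSums

variable {𝕜 E : Type*} [RCLike 𝕜] [NormedAddCommGroup E] [InnerProductSpace 𝕜 E]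

theorem norm_sum_inner_le_sqrt_mul_sqrt {ι : Type*} (s : Finset ι) (u v : ι → E) :
    ‖∑ i ∈ s, (inner 𝕜 (u i) (v i) : 𝕜)‖ ≤
      √(∑ i ∈ s, ‖u i‖ ^ 2) * √(∑ i ∈ s, ‖v i‖ ^ 2) :=
  calc ‖∑ i ∈ s, (inner 𝕜 (u i) (v i) : 𝕜)‖
      ≤ ∑ i ∈ s, ‖(inner 𝕜 (u i) (v i) : 𝕜)‖ := norm_sum_le _ _
    _ ≤ ∑ i ∈ s, ‖u i‖ * ‖v i‖ := Finset.sum_le_sum fun i _ => norm_inner_le_norm _ _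
    _ ≤ _ := Real.sum_mul_le_sqrt_mul_sqrt s _ _

theorem norm_sum_inner_add_sum_inner_le {ι κ : Type*} (s : Finset ι) (t : Finset κ)
    (u v : ι → E) (u' v' : κ → E) :
    ‖∑ i ∈ s, (inner 𝕜 (u i) (v i) : 𝕜) + ∑ j ∈ t, (inner 𝕜 (u' j) (v' j) : 𝕜)‖ ≤
      √(∑ i ∈ s, ‖u i‖ ^ 2 + ∑ j ∈ t, ‖u' j‖ ^ 2) *
        √(∑ i ∈ s, ‖v i‖ ^ 2 + ∑ j ∈ t, ‖v' j‖ ^ 2) := by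
  simpa only [Finset.sum_disjSum, Sum.elim_inl, Sum.elim_inr] using
    norm_sum_inner_le_sqrt_mul_sqrt (𝕜 := 𝕜) (s.disjSum t) (Sum.elim u u') (Sum.elim v v')

theorem inner_eq_sum_inner_add_inner_defect [CompleteSpace E] {d : ℕ}
    (A : Fin d → E →L[𝕜] E) {D : E →L[𝕜] E} (hD : IsSelfAdjoint D)
    (hDsq : D * D = 1 - ∑ i, adjoint (A i) * A i) (u v : E) :
    (inner 𝕜 u v : 𝕜) = ∑ i, (inner 𝕜 (A i u) (A i v) : 𝕜) + inner 𝕜 (D u) (D v) := by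
  have hDD : (inner 𝕜 (D u) (D v) : 𝕜) = inner 𝕜 u ((D * D) v) := by
    rw [mul_apply_eq_comp, ← adjoint_inner_right, hD.adjoint_eq]
  simp only [hDD, hDsq, sub_apply, one_apply_eq_self, sum_apply, mul_apply_eq_comp,
    inner_sub_right, inner_sum, adjoint_inner_right, add_sub_cancel]

end InnerSums

theorem Fintype.sum_ofFn_succ {β M : Type*} [Fintype β] [AddCommMonoid M] (n : ℕ)
    (f : List β → M) :
    ∑ α : Fin (n + 1) → β, f (List.ofFn α) = ∑ α : Fin n → β, ∑ i, f (i :: List.ofFn α) := by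
  rw [← (Fin.consEquiv fun _ => β).sum_comp, Fintype.sum_prod_type, Finset.sum_comm]
  simp only [Fin.consEquiv, Equiv.coe_fn_mk, List.ofFn_succ, Fin.cons_zero, Fin.cons_succ]

section Words

variable {H : Type*} [NormedAddCommGroup H] [InnerProductSpace ℂ H] [CompleteSpace H]
  {d : ℕ} (A : Fin d → H →L[ℂ] H) {D : H →L[ℂ] H}

theorem inner_eq_sum_inner_Aword_add_sum_inner_defect (hD : IsSelfAdjoint D)
    (hDsq : D * D = 1 - ∑ i, adjoint (A i) * A i) (N : ℕ) (u v : H) :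
    (inner ℂ u v : ℂ) =
      ∑ α : Fin N → Fin d, (inner ℂ (Aword A (List.ofFn α) u) (Aword A (List.ofFn α) v) : ℂ)
      + ∑ n ∈ Finset.range N, ∑ α : Fin n → Fin d,
          (inner ℂ (D (Aword A (List.ofFn α) u)) (D (Aword A (List.ofFn α) v)) : ℂ) := by
  induction N with
  | zero => simp [Aword]
  | succ N ih =>
    have hstep : ∀ w : List (Fin d),
        (inner ℂ (Aword A w u) (Aword A w v) : ℂ) =
          ∑ i, (inner ℂ (Aword A (i :: w) u) (Aword A (i :: w) v) : ℂ)
            + inner ℂ (D (Aword A w u)) (D (Aword A w v)) :=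
      fun w => inner_eq_sum_inner_add_inner_defect A hD hDsq _ _
    conv_lhs => rw [ih, Finset.sum_congr rfl fun α _ => hstep (List.ofFn α)]
    rw [Finset.sum_range_succ, Fintype.sum_ofFn_succ N
      (fun w => (inner ℂ (Aword A w u) (Aword A w v) : ℂ)), Finset.sum_add_distrib]
    ring

theorem inner_sub_sum_inner_defect_eq (hD : IsSelfAdjoint D)
    (hDsq : D * D = 1 - ∑ i, adjoint (A i) * A i) {M N : ℕ} (hMN : M ≤ N) (u v : H) :
    (inner ℂ u v : ℂ) - ∑ n ∈ Finset.range M, ∑ α : Fin n → Fin d,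
        (inner ℂ (D (Aword A (List.ofFn α) u)) (D (Aword A (List.ofFn α) v)) : ℂ) =
      ∑ α : Fin N → Fin d, (inner ℂ (Aword A (List.ofFn α) u) (Aword A (List.ofFn α) v) : ℂ)
      + ∑ n ∈ Finset.Ico M N, ∑ α : Fin n → Fin d,
          (inner ℂ (D (Aword A (List.ofFn α) u)) (D (Aword A (List.ofFn α) v)) : ℂ) := by
  rw [inner_eq_sum_inner_Aword_add_sum_inner_defect A hD hDsq N,
    ← Finset.sum_range_add_sum_Ico _ hMN]
  ring

end Words

theorem kernel_truncation_residual_energy_general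
    {H : Type*} [NormedAddCommGroup H] [InnerProductSpace ℂ H] [CompleteSpace H]
    {X : Type*} {d : ℕ} (A : Fin d → H →L[ℂ] H)
    (D : H →L[ℂ] H) (hDpos : D.IsPositive)
    (hDsq : D * D = 1 - ∑ i, adjoint (A i) * A i)
    (Φ : X → H) (M N : ℕ) (hMN : M ≤ N)
    (k₀ : X → X → ℂ) (hk₀ : ∀ x y, k₀ x y = inner ℂ (Φ x) (Φ y))
    (kt : X → X → ℂ)
    (hkt : ∀ x y, kt x y = ∑ n ∈ Finset.range M, ∑ α : Fin n → Fin d,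
      (inner ℂ (D (Aword A (List.ofFn α) (Φ x))) (D (Aword A (List.ofFn α) (Φ y))) : ℂ))
    (R : X → ℝ)
    (hR : ∀ x, R x = (∑ α : Fin N → Fin d, ‖Aword A (List.ofFn α) (Φ x)‖ ^ 2)
      + ∑ n ∈ Finset.Ico M N, ∑ α : Fin n → Fin d,
          ‖D (Aword A (List.ofFn α) (Φ x))‖ ^ 2) :
    (∀ x : X, k₀ x x - kt x x = (R x : ℂ) ∧ 0 ≤ R x)
    ∧ (∀ x y : X, ‖k₀ x y - kt x y‖ ≤ Real.sqrt (R x * R y)) := by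
  have hres := inner_sub_sum_inner_defect_eq A hDpos.isSelfAdjoint hDsq hMN
  have hR_nonneg : ∀ x, 0 ≤ R x := fun x => by rw [hR x]; positivity
  refine ⟨fun x => ⟨?_, hR_nonneg x⟩, fun x y => ?_⟩
  · rw [hk₀, hkt, hres, hR]
    push_cast [inner_self_eq_norm_sq_to_K]
    rfl
  · rw [hk₀, hkt, hres, Real.sqrt_mul (hR_nonneg x), hR, hR]
    simp only [Finset.sum_sigma']
    exact norm_sum_inner_add_sum_inner_le _ _ _ _ _ _

/-- **Kernel truncation error is measured exactly by the discarded residual energy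
(Theorem 5.1).**  Here `k₀(x,y) = ⟨Φ₀x, Φ₀y⟩`, the truncated kernel keeps the defect
blocks of depth `< M`, and `R_{N,M}(x)` is the discarded energy at depth `N` beyond
truncation level `M ≤ N`.  Then `k₀(x,x) - k̃_M(x,x) = R_{N,M}(x) ≥ 0` and
`|k₀(x,y) - k̃_M(x,y)| ≤ (R_{N,M}(x) R_{N,M}(y))^{1/2}`. -/
theorem kernel_truncation_residual_energy
    {H : Type*} [NormedAddCommGroup H] [InnerProductSpace ℂ H] [CompleteSpace H]
    {X : Type*} {d : ℕ} (A : Fin d → H →L[ℂ] H)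
    (hA : ((1 : H →L[ℂ] H) - ∑ i, adjoint (A i) * A i).IsPositive)
    (D : H →L[ℂ] H) (hDpos : D.IsPositive)
    (hDsq : D * D = 1 - ∑ i, adjoint (A i) * A i)
    (Φ : X → H) (M N : ℕ) (hMN : M ≤ N)
    (k₀ : X → X → ℂ) (hk₀ : ∀ x y, k₀ x y = inner ℂ (Φ x) (Φ y))
    (kt : X → X → ℂ)
    (hkt : ∀ x y, kt x y = ∑ n ∈ Finset.range M, ∑ α : Fin n → Fin d,
      (inner ℂ (D (Aword A (List.ofFn α) (Φ x))) (D (Aword A (List.ofFn α) (Φ y))) : ℂ))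
    (R : X → ℝ)
    (hR : ∀ x, R x = (∑ α : Fin N → Fin d, ‖Aword A (List.ofFn α) (Φ x)‖ ^ 2)
      + ∑ n ∈ Finset.Ico M N, ∑ α : Fin n → Fin d,
          ‖D (Aword A (List.ofFn α) (Φ x))‖ ^ 2) :
    (∀ x : X, k₀ x x - kt x x = (R x : ℂ) ∧ 0 ≤ R x)
    ∧ (∀ x y : X, ‖k₀ x y - kt x y‖ ≤ Real.sqrt (R x * R y)) :=
  kernel_truncation_residual_energy_general A D hDpos hDsq Φ M N hMN k₀ hk₀ kt hkt R hR
end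

section
/- Let H be a complex Hilbert space and A_1, …, A_d bounded operators with ∑_{i=1}^d A_i* A_i ≤ cI for some c ∈ (0,1); let D := (I − ∑_{i=1}^d A_i* A_i)^{1/2}, Φ₀ : X → H a map, k₀(x,y) := ⟨Φ₀(x), Φ₀(y)⟩, k̃_M(x,y) := ∑_{|α|<M} ⟨D A_α Φ₀(x), D A_α Φ₀(y)⟩, and R_{N,M}(x) := ∑_{|α|=N} ‖A_α Φ₀(x)‖² + ∑_{M≤|α|<N} ‖D A_α Φ₀(x)‖². Then for every M ≥ 0, every N ≥ M, and every x ∈ X: R_{N,M}(x) = ∑_{|α|=M} ‖A_α Φ₀(x)‖² ≤ c^M k₀(x,x); consequently 0 ≤ k₀(x,x) − k̃_M(x,x) ≤ c^M k₀(x,x), and for all x, y ∈ X, |k₀(x,y) − k̃_M(x,y)| ≤ c^M (k₀(x,x) k₀(y,y))^{1/2}. -/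
open ContinuousLinearMap ComplexOrder

/-!
Applying the defect identity `⟪v, w⟫ = ∑ᵢ ⟪Aᵢ v, Aᵢ w⟫ + ⟪D v, D w⟫` to `A_α v, A_α w` and summing
over the words of length `n` shows that `F_n(v, w) := ∑_{|α|=n} ⟪A_α v, A_α w⟫` satisfies
`F_{n+1} = F_n - ∑_{|α|=n} ⟪D A_α v, D A_α w⟫`. Telescoping gives `R_{N,M}(x) = F_M(Φ₀ x, Φ₀ x)` and
`k₀ - k̃_M = F_M ∘ (Φ₀ × Φ₀)`. The hypothesis `∑ᵢ Aᵢ* Aᵢ ≤ c` gives `F_{n+1}(v, v) ≤ c F_n(v, v)`,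
hence `F_M(v, v) ≤ c^M ‖v‖²`, and Cauchy–Schwarz over the words bounds `F_M(v, w)`.
-/

open Finset
open scoped InnerProductSpace

theorem Fintype.sum_fun_fin_succ {β M : Type*} [Fintype β] [AddCommMonoid M] (n : ℕ)
    (g : (Fin (n + 1) → β) → M) :
    ∑ α : Fin (n + 1) → β, g α = ∑ i : β, ∑ b : Fin n → β, g (Fin.cons i b) :=
  (Fintype.sum_equiv (Fin.consEquiv fun _ => β) _ _ fun _ => rfl).symm.trans
    (Fintype.sum_prod_type _)

namespace Aword

variable {H : Type*} [NormedAddCommGroup H] [InnerProductSpace ℂ H] {d : ℕ}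
  (A : Fin d → H →L[ℂ] H)

theorem ofFn_cons {n : ℕ} (i : Fin d) (b : Fin n → Fin d) :
    Aword A (List.ofFn (Fin.cons i b)) = A i * Aword A (List.ofFn b) := by
  simp [List.ofFn_succ, Aword]

noncomputable def wordInner (n : ℕ) (v w : H) : ℂ :=
  ∑ α : Fin n → Fin d, ⟪Aword A (List.ofFn α) v, Aword A (List.ofFn α) w⟫_ℂ

noncomputable def defectInner (D : H →L[ℂ] H) (n : ℕ) (v w : H) : ℂ :=
  ∑ α : Fin n → Fin d, ⟪D (Aword A (List.ofFn α) v), D (Aword A (List.ofFn α) w)⟫_ℂ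

noncomputable def wordNormSq (n : ℕ) (v : H) : ℝ :=
  ∑ α : Fin n → Fin d, ‖Aword A (List.ofFn α) v‖ ^ 2

noncomputable def defectNormSq (D : H →L[ℂ] H) (n : ℕ) (v : H) : ℝ :=
  ∑ α : Fin n → Fin d, ‖D (Aword A (List.ofFn α) v)‖ ^ 2

theorem wordInner_zero (v w : H) : wordInner A 0 v w = ⟪v, w⟫_ℂ := by
  simp [wordInner, Aword]

theorem wordInner_self (n : ℕ) (v : H) : wordInner A n v v = wordNormSq A n v := by
  simp [wordInner, wordNormSq, inner_self_eq_norm_sq_to_K]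

theorem defectInner_self (D : H →L[ℂ] H) (n : ℕ) (v : H) :
    defectInner A D n v v = defectNormSq A D n v := by
  simp [defectInner, defectNormSq, inner_self_eq_norm_sq_to_K]

theorem norm_wordInner_le_sqrt_mul_sqrt (n : ℕ) (v w : H) :
    ‖wordInner A n v w‖ ≤ √(wordNormSq A n v) * √(wordNormSq A n w) :=
  calc ‖wordInner A n v w‖
      ≤ ∑ α : Fin n → Fin d, ‖Aword A (List.ofFn α) v‖ * ‖Aword A (List.ofFn α) w‖ :=
        (norm_sum_le _ _).trans (sum_le_sum fun _ _ => norm_inner_le_norm _ _)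
    _ ≤ √(wordNormSq A n v) * √(wordNormSq A n w) := Real.sum_mul_le_sqrt_mul_sqrt _ _ _


variable [CompleteSpace H]

theorem inner_eq_sum_inner_add_inner {D : H →L[ℂ] H} (hD : IsSelfAdjoint D)
    (hDsq : D * D = 1 - ∑ i, adjoint (A i) * A i) (v w : H) :
    ⟪v, w⟫_ℂ = ∑ i, ⟪A i v, A i w⟫_ℂ + ⟪D v, D w⟫_ℂ := by
  have hD' : ⟪D v, D w⟫_ℂ = ⟪v, (D * D) w⟫_ℂ := by
    rw [mul_apply_eq_comp, ← adjoint_inner_right, hD.adjoint_eq]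
  simp [hD', hDsq, adjoint_inner_right]

theorem wordInner_succ {D : H →L[ℂ] H} (hD : IsSelfAdjoint D)
    (hDsq : D * D = 1 - ∑ i, adjoint (A i) * A i) (n : ℕ) (v w : H) :
    wordInner A (n + 1) v w = wordInner A n v w - defectInner A D n v w := by
  simp only [wordInner, defectInner, Fintype.sum_fun_fin_succ, ofFn_cons, mul_apply_eq_comp]
  rw [sum_comm, ← sum_sub_distrib]
  refine sum_congr rfl fun α _ => ?_
  rw [inner_eq_sum_inner_add_inner A hD hDsq]
  ring

theorem wordInner_add_sum_Ico_defectInner {D : H →L[ℂ] H} (hD : IsSelfAdjoint D)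
    (hDsq : D * D = 1 - ∑ i, adjoint (A i) * A i) {m n : ℕ} (hmn : m ≤ n) (v w : H) :
    wordInner A n v w + ∑ k ∈ Ico m n, defectInner A D k v w = wordInner A m v w := by
  have hstep : ∀ k, defectInner A D k v w = -(wordInner A (k + 1) v w - wordInner A k v w) := by
    intro k
    rw [wordInner_succ A hD hDsq]
    ring
  rw [sum_congr rfl fun k _ => hstep k, sum_neg_distrib, sum_Ico_sub (fun k => wordInner A k v w) hmn]
  ring

theorem wordNormSq_add_sum_Ico_defectNormSq {D : H →L[ℂ] H} (hD : IsSelfAdjoint D)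
    (hDsq : D * D = 1 - ∑ i, adjoint (A i) * A i) {m n : ℕ} (hmn : m ≤ n) (v : H) :
    wordNormSq A n v + ∑ k ∈ Ico m n, defectNormSq A D k v = wordNormSq A m v := by
  apply Complex.ofReal_injective
  push_cast
  simp only [← wordInner_self, ← defectInner_self]
  exact wordInner_add_sum_Ico_defectInner A hD hDsq hmn v v

theorem sum_norm_sq_apply_le {c : ℝ}
    (hA : ((c : ℂ) • (1 : H →L[ℂ] H) - ∑ i, adjoint (A i) * A i).IsPositive) (v : H) :
    ∑ i, ‖A i v‖ ^ 2 ≤ c * ‖v‖ ^ 2 := by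
  have h := hA.re_inner_nonneg_left v
  simpa [sub_apply, _root_.sum_apply, inner_sub_left, sum_inner, adjoint_inner_left,
    ← Complex.ofReal_pow, Complex.ofReal_re] using h

theorem wordNormSq_succ_le {c : ℝ}
    (hA : ((c : ℂ) • (1 : H →L[ℂ] H) - ∑ i, adjoint (A i) * A i).IsPositive) (n : ℕ) (v : H) :
    wordNormSq A (n + 1) v ≤ c * wordNormSq A n v := by
  simp only [wordNormSq, Fintype.sum_fun_fin_succ, ofFn_cons, mul_apply_eq_comp]
  rw [sum_comm, mul_sum]
  exact sum_le_sum fun α _ => sum_norm_sq_apply_le A hA _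

theorem wordNormSq_le_pow_mul {c : ℝ} (hc : 0 ≤ c)
    (hA : ((c : ℂ) • (1 : H →L[ℂ] H) - ∑ i, adjoint (A i) * A i).IsPositive) (n : ℕ) (v : H) :
    wordNormSq A n v ≤ c ^ n * ‖v‖ ^ 2 := by
  induction n with
  | zero => simp [wordNormSq, Aword]
  | succ n ih =>
    calc wordNormSq A (n + 1) v ≤ c * wordNormSq A n v := wordNormSq_succ_le A hA n v
      _ ≤ c * (c ^ n * ‖v‖ ^ 2) := mul_le_mul_of_nonneg_left ih hc
      _ = c ^ (n + 1) * ‖v‖ ^ 2 := by ring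

theorem norm_wordInner_le {c : ℝ} (hc : 0 ≤ c)
    (hA : ((c : ℂ) • (1 : H →L[ℂ] H) - ∑ i, adjoint (A i) * A i).IsPositive) (n : ℕ) (v w : H) :
    ‖wordInner A n v w‖ ≤ c ^ n * (‖v‖ * ‖w‖) := by
  have hsqrt : ∀ u : H, √(wordNormSq A n u) ≤ √(c ^ n) * ‖u‖ := fun u => by
    rw [← Real.sqrt_sq (norm_nonneg u), ← Real.sqrt_mul (pow_nonneg hc n)]
    exact Real.sqrt_le_sqrt (wordNormSq_le_pow_mul A hc hA n u)
  calc ‖wordInner A n v w‖ ≤ √(wordNormSq A n v) * √(wordNormSq A n w) :=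
        norm_wordInner_le_sqrt_mul_sqrt A n v w
    _ ≤ (√(c ^ n) * ‖v‖) * (√(c ^ n) * ‖w‖) :=
        mul_le_mul (hsqrt v) (hsqrt w) (Real.sqrt_nonneg _) (by positivity)
    _ = c ^ n * (‖v‖ * ‖w‖) := by
        rw [mul_mul_mul_comm, Real.mul_self_sqrt (pow_nonneg hc n)]

end Aword

theorem kernel_truncation_geometric_bound_general
    {H : Type*} [NormedAddCommGroup H] [InnerProductSpace ℂ H] [CompleteSpace H]
    {X : Type*} {d : ℕ} (A : Fin d → H →L[ℂ] H)
    (c : ℝ) (hc0 : 0 < c)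
    (hA : ((c : ℂ) • (1 : H →L[ℂ] H) - ∑ i, adjoint (A i) * A i).IsPositive)
    (D : H →L[ℂ] H) (hDpos : D.IsPositive)
    (hDsq : D * D = 1 - ∑ i, adjoint (A i) * A i)
    (Φ : X → H) (M N : ℕ) (hMN : M ≤ N)
    (k₀ : X → X → ℂ) (hk₀ : ∀ x y, k₀ x y = inner ℂ (Φ x) (Φ y))
    (kt : X → X → ℂ)
    (hkt : ∀ x y, kt x y = ∑ n ∈ Finset.range M, ∑ α : Fin n → Fin d,
      (inner ℂ (D (Aword A (List.ofFn α) (Φ x))) (D (Aword A (List.ofFn α) (Φ y))) : ℂ))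
    (R : X → ℝ)
    (hR : ∀ x, R x = (∑ α : Fin N → Fin d, ‖Aword A (List.ofFn α) (Φ x)‖ ^ 2)
      + ∑ n ∈ Finset.Ico M N, ∑ α : Fin n → Fin d,
          ‖D (Aword A (List.ofFn α) (Φ x))‖ ^ 2) :
    (∀ x : X,
      R x = (∑ α : Fin M → Fin d, ‖Aword A (List.ofFn α) (Φ x)‖ ^ 2)
      ∧ (R x : ℂ) ≤ (c : ℂ) ^ M * k₀ x x
      ∧ 0 ≤ k₀ x x - kt x x
      ∧ k₀ x x - kt x x ≤ (c : ℂ) ^ M * k₀ x x)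
    ∧ (∀ x y : X,
        ‖k₀ x y - kt x y‖ ≤ c ^ M * Real.sqrt ((k₀ x x).re * (k₀ y y).re)) := by
  have hD := hDpos.isSelfAdjoint
  have hR_eq (x : X) : R x = Aword.wordNormSq A M (Φ x) :=
    (hR x).trans (Aword.wordNormSq_add_sum_Ico_defectNormSq A hD hDsq hMN (Φ x))
  have hgap (x y : X) : k₀ x y - kt x y = Aword.wordInner A M (Φ x) (Φ y) := by
    rw [hk₀, hkt, ← Aword.wordInner_zero A, range_eq_Ico,
      ← Aword.wordInner_add_sum_Ico_defectInner A hD hDsq (Nat.zero_le M)]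
    simp [Aword.defectInner]
  have hk₀_self (x : X) : k₀ x x = ((‖Φ x‖ ^ 2 : ℝ) : ℂ) := by
    rw [hk₀, inner_self_eq_norm_sq_to_K]
    norm_cast
  have hbound (x : X) : (Aword.wordNormSq A M (Φ x) : ℂ) ≤ (c : ℂ) ^ M * k₀ x x := by
    rw [hk₀_self]
    exact_mod_cast Aword.wordNormSq_le_pow_mul A hc0.le hA M (Φ x)
  refine ⟨fun x => ⟨hR_eq x, ?_, ?_, ?_⟩, fun x y => ?_⟩
  · rw [hR_eq]
    exact hbound x
  · rw [hgap, Aword.wordInner_self]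
    exact Complex.zero_le_real.mpr (sum_nonneg fun _ _ => sq_nonneg _)
  · rw [hgap, Aword.wordInner_self]
    exact hbound x
  · rw [hgap, hk₀_self, hk₀_self, Complex.ofReal_re, Complex.ofReal_re, ← mul_pow,
      Real.sqrt_sq (by positivity)]
    exact Aword.norm_wordInner_le A hc0.le hA M (Φ x) (Φ y)

/-- **Geometric bound on the truncation error (Corollary 5.2).**
If `∑ᵢ Aᵢ* Aᵢ ≤ c I` with `c ∈ (0,1)` (expressed by positivity of `c I - ∑ Aᵢ* Aᵢ`),
then for all `0 ≤ M ≤ N` and `x`: `R_{N,M}(x) = ∑_{|α|=M} ‖A_α Φ₀(x)‖² ≤ c^M k₀(x,x)`,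
hence `0 ≤ k₀(x,x) - k̃_M(x,x) ≤ c^M k₀(x,x)` and
`|k₀(x,y) - k̃_M(x,y)| ≤ c^M (k₀(x,x) k₀(y,y))^{1/2}`. -/
theorem kernel_truncation_geometric_bound
    {H : Type*} [NormedAddCommGroup H] [InnerProductSpace ℂ H] [CompleteSpace H]
    {X : Type*} {d : ℕ} (A : Fin d → H →L[ℂ] H)
    (c : ℝ) (hc0 : 0 < c) (hc1 : c < 1)
    (hA : ((c : ℂ) • (1 : H →L[ℂ] H) - ∑ i, adjoint (A i) * A i).IsPositive)
    (D : H →L[ℂ] H) (hDpos : D.IsPositive)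
    (hDsq : D * D = 1 - ∑ i, adjoint (A i) * A i)
    (Φ : X → H) (M N : ℕ) (hMN : M ≤ N)
    (k₀ : X → X → ℂ) (hk₀ : ∀ x y, k₀ x y = inner ℂ (Φ x) (Φ y))
    (kt : X → X → ℂ)
    (hkt : ∀ x y, kt x y = ∑ n ∈ Finset.range M, ∑ α : Fin n → Fin d,
      (inner ℂ (D (Aword A (List.ofFn α) (Φ x))) (D (Aword A (List.ofFn α) (Φ y))) : ℂ))
    (R : X → ℝ)
    (hR : ∀ x, R x = (∑ α : Fin N → Fin d, ‖Aword A (List.ofFn α) (Φ x)‖ ^ 2)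
      + ∑ n ∈ Finset.Ico M N, ∑ α : Fin n → Fin d,
          ‖D (Aword A (List.ofFn α) (Φ x))‖ ^ 2) :
    (∀ x : X,
      R x = (∑ α : Fin M → Fin d, ‖Aword A (List.ofFn α) (Φ x)‖ ^ 2)
      ∧ (R x : ℂ) ≤ (c : ℂ) ^ M * k₀ x x
      ∧ 0 ≤ k₀ x x - kt x x
      ∧ k₀ x x - kt x x ≤ (c : ℂ) ^ M * k₀ x x)
    ∧ (∀ x y : X,
        ‖k₀ x y - kt x y‖ ≤ c ^ M * Real.sqrt ((k₀ x x).re * (k₀ y y).re)) :=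
  kernel_truncation_geometric_bound_general A c hc0 hA D hDpos hDsq Φ M N hMN k₀ hk₀ kt hkt R hR
end
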